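/- arXiv:2504.16690 — 2 statements merged into one kernel-verified Lean document; each statement's English description precedes it below -/
import Mathlib

section
/- Let B be a bicategory and f : A ⟶ B a 1-cell such that for every object Z the precomposition functor (− ∘ f) : B(B,Z) ⥤ B(A,Z) reflects isomorphisms (f is corepresentably surjective). Let X and Y be objects that are right Kan injective with respect to f, meaning every 1-cell x : A ⟶ X admits a right Kan extension ran_f x along f whose counit 2-cell ran_f x ∘ f ⟶ x is invertible, and likewise for Y. Then every 1-cell g : X ⟶ Y preserves these right Kan extensions: for every x : A ⟶ X, the pair (g ∘ ran_f x, g ◁ ε) is a right Kan extension of g ∘ x along f. -/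
universe w v u

open CategoryTheory CategoryTheory.Bicategory

variable {B : Type u} [Bicategory.{w, v} B]

/-- `(r, ε)` is a right Kan extension of `x : A ⟶ X` along `f : A ⟶ Y`. -/
def IsRanCounit {A Y X : B} (f : A ⟶ Y) (x : A ⟶ X) (r : Y ⟶ X) (ε' : f ≫ r ⟶ x) : Prop :=
  ∀ (y : Y ⟶ X) (α : f ≫ y ⟶ x), ∃! τ : y ⟶ r, f ◁ τ ≫ ε' = α

/-
The comparison 2-cell `φ : g ∘ ran_f x ⟶ ran_f (g ∘ x)` satisfies `f ◁ φ ≫ ε_Y = g ◁ ε_X`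
(up to the associator). Both counits are invertible, so `f ◁ φ` is invertible; as `f` is
corepresentably surjective, `φ` itself is invertible, and a right Kan extension transported
along an invertible 2-cell is again one.
-/

namespace IsRanCounit

variable {A B' X : B} {f : A ⟶ B'} {x : A ⟶ X} {r : B' ⟶ X} {ε₁ : f ≫ r ⟶ x}

theorem whiskerLeft_isIso_comp (h : IsRanCounit f x r ε₁) {r' : B' ⟶ X} (φ : r' ⟶ r)
    [IsIso φ] : IsRanCounit f x r' (f ◁ φ ≫ ε₁) := by
  intro y α
  obtain ⟨τ, hτ, hτ_uniq⟩ := h y α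
  refine ⟨τ ≫ inv φ, ?_, fun σ hσ => ?_⟩
  · simpa only [Category.assoc, ← whiskerLeft_comp_assoc, IsIso.inv_hom_id, Category.comp_id,
      Category.id_comp] using hτ
  · rw [← hτ_uniq (σ ≫ φ) (by simpa only [whiskerLeft_comp, Category.assoc] using hσ),
      Category.assoc, IsIso.hom_inv_id, Category.comp_id]

theorem of_isIso_counit (hf : ∀ (y y' : B' ⟶ X) (τ : y ⟶ y'), IsIso (f ◁ τ) → IsIso τ)
    (h : IsRanCounit f x r ε₁) [IsIso ε₁] {r' : B' ⟶ X} (ε₂ : f ≫ r' ⟶ x) [IsIso ε₂] :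
    IsRanCounit f x r' ε₂ := by
  obtain ⟨φ, hφ, -⟩ := h r' ε₂
  have : IsIso (f ◁ φ) := by
    rw [(IsIso.eq_comp_inv ε₁).mpr hφ]
    infer_instance
  have := hf _ _ φ this
  exact hφ ▸ h.whiskerLeft_isIso_comp φ

end IsRanCounit

theorem statement1_general {A B' X Y : B} (f : A ⟶ B')
    (hf : ∀ (Z : B) (y y' : B' ⟶ Z) (τ : y ⟶ y'), IsIso (f ◁ τ) → IsIso τ)
    (rX : (A ⟶ X) → (B' ⟶ X)) (εX : ∀ x : A ⟶ X, f ≫ rX x ⟶ x)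
    (hXiso : ∀ x : A ⟶ X, IsIso (εX x))
    (rY : (A ⟶ Y) → (B' ⟶ Y)) (εY : ∀ x : A ⟶ Y, f ≫ rY x ⟶ x)
    (hYran : ∀ x : A ⟶ Y, IsRanCounit f x (rY x) (εY x))
    (hYiso : ∀ x : A ⟶ Y, IsIso (εY x))
    (g : X ⟶ Y) (x : A ⟶ X) :
    IsRanCounit f (x ≫ g) (rX x ≫ g) ((α_ f (rX x) g).inv ≫ εX x ▷ g) := by
  have := hXiso x
  have := hYiso (x ≫ g)
  exact IsRanCounit.of_isIso_counit (hf Y) (hYran (x ≫ g)) _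

/-- If `f` is corepresentably surjective (precomposition with `f` reflects isomorphisms)
and `X`, `Y` are right Kan injective along `f` (every 1-cell into them has a right Kan
extension along `f` with invertible counit), then every 1-cell `g : X ⟶ Y` preserves
these right Kan extensions. -/
theorem statement1 {A B' X Y : B} (f : A ⟶ B')
    (hf : ∀ (Z : B) (y y' : B' ⟶ Z) (τ : y ⟶ y'), IsIso (f ◁ τ) → IsIso τ)
    (rX : (A ⟶ X) → (B' ⟶ X)) (εX : ∀ x : A ⟶ X, f ≫ rX x ⟶ x)
    (hXran : ∀ x : A ⟶ X, IsRanCounit f x (rX x) (εX x))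
    (hXiso : ∀ x : A ⟶ X, IsIso (εX x))
    (rY : (A ⟶ Y) → (B' ⟶ Y)) (εY : ∀ x : A ⟶ Y, f ≫ rY x ⟶ x)
    (hYran : ∀ x : A ⟶ Y, IsRanCounit f x (rY x) (εY x))
    (hYiso : ∀ x : A ⟶ Y, IsIso (εY x))
    (g : X ⟶ Y) (x : A ⟶ X) :
    IsRanCounit f (x ≫ g) (rX x ≫ g) ((α_ f (rX x) g).inv ≫ εX x ▷ g) :=
  statement1_general f hf rX εX hXiso rY εY hYran hYiso g x
end

section
/- Let B be a bicategory and f : A ⟶ B a 1-cell such that for every object Z the precomposition functor (− ∘ f) : B(B,Z) ⥤ B(A,Z) is fully faithful (f is corepresentably fully surjective). Then for every object X the following are equivalent: (a) every 1-cell x : A ⟶ X admits a right Kan extension along f whose counit is invertible; (b) every 1-cell x : A ⟶ X admits a left Kan extension along f whose unit is invertible; (c) the precomposition functor (− ∘ f) : B(B,X) ⥤ B(A,X) is an equivalence of categories. -/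
universe w v u

open CategoryTheory CategoryTheory.Bicategory

variable {B : Type u} [Bicategory.{w, v} B]

/-- `(l, η)` is a left Kan extension of `x : A ⟶ X` along `f : A ⟶ Y`. -/
def IsLanUnit {A Y X : B} (f : A ⟶ Y) (x : A ⟶ X) (l : Y ⟶ X) (η : x ⟶ f ≫ l) : Prop :=
  ∀ (y : Y ⟶ X) (α : x ⟶ f ≫ y), ∃! τ : l ⟶ y, η ≫ f ◁ τ = α

/-!
Precomposition with `f` is fully faithful, so it is an equivalence exactly when it is
essentially surjective, i.e. when every `x : A ⟶ X` is isomorphic to some `f ≫ r`. Conversely,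
for any isomorphism `e : f ≫ r ≅ x` the counit `e.hom` is terminal: the 2-cells
`f ≫ y ⟶ x` correspond to the 2-cells `f ≫ y ⟶ f ≫ r` by composing with `e.hom`, and
these correspond to the 2-cells `y ⟶ r` by whiskering with `f`. Dually for left Kan extensions.
-/

section

variable {A Y X : B} (f : A ⟶ Y) (x : A ⟶ X)

theorem isRanCounit_iff_bijective (r : Y ⟶ X) (ε' : f ≫ r ⟶ x) :
    IsRanCounit f x r ε' ↔ ∀ y : Y ⟶ X, Function.Bijective fun τ : y ⟶ r => f ◁ τ ≫ ε' :=
  forall_congr' fun _ => (Function.bijective_iff_existsUnique _).symm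

theorem isLanUnit_iff_bijective (l : Y ⟶ X) (η : x ⟶ f ≫ l) :
    IsLanUnit f x l η ↔ ∀ y : Y ⟶ X, Function.Bijective fun τ : l ⟶ y => η ≫ f ◁ τ :=
  forall_congr' fun _ => (Function.bijective_iff_existsUnique _).symm

variable {f x}

theorem IsRanCounit.of_iso (hf : ∀ y y' : Y ⟶ X, Function.Bijective fun τ : y ⟶ y' => f ◁ τ)
    {r : Y ⟶ X} (e : f ≫ r ≅ x) : IsRanCounit f x r e.hom :=
  (isRanCounit_iff_bijective f x r e.hom).2 fun y => e.homToEquiv.bijective.comp (hf y r)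

theorem IsLanUnit.of_iso (hf : ∀ y y' : Y ⟶ X, Function.Bijective fun τ : y ⟶ y' => f ◁ τ)
    {l : Y ⟶ X} (e : f ≫ l ≅ x) : IsLanUnit f x l e.inv :=
  (isLanUnit_iff_bijective f x l e.inv).2 fun y => e.homFromEquiv.bijective.comp (hf l y)

theorem exists_isRanCounit_isIso_iff
    (hf : ∀ y y' : Y ⟶ X, Function.Bijective fun τ : y ⟶ y' => f ◁ τ) :
    (∃ (r : Y ⟶ X) (ε' : f ≫ r ⟶ x), IsRanCounit f x r ε' ∧ IsIso ε') ↔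
      ∃ r : Y ⟶ X, Nonempty (f ≫ r ≅ x) :=
  ⟨fun ⟨r, ε', _, _⟩ => ⟨r, ⟨asIso ε'⟩⟩,
    fun ⟨r, ⟨e⟩⟩ => ⟨r, e.hom, IsRanCounit.of_iso hf e, inferInstance⟩⟩

theorem exists_isLanUnit_isIso_iff
    (hf : ∀ y y' : Y ⟶ X, Function.Bijective fun τ : y ⟶ y' => f ◁ τ) :
    (∃ (l : Y ⟶ X) (η : x ⟶ f ≫ l), IsLanUnit f x l η ∧ IsIso η) ↔
      ∃ l : Y ⟶ X, Nonempty (f ≫ l ≅ x) :=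
  ⟨fun ⟨l, η, _, _⟩ => ⟨l, ⟨(asIso η).symm⟩⟩,
    fun ⟨l, ⟨e⟩⟩ => ⟨l, e.inv, IsLanUnit.of_iso hf e, inferInstance⟩⟩

end

theorem precomp_isEquivalence_iff {A Y : B} (X : B) (f : A ⟶ Y)
    (hf : ∀ y y' : Y ⟶ X, Function.Bijective fun τ : y ⟶ y' => f ◁ τ) :
    (precomp X f).IsEquivalence ↔ ∀ x : A ⟶ X, ∃ r : Y ⟶ X, Nonempty (f ≫ r ≅ x) := by
  refine ⟨fun h => h.essSurj.mem_essImage, fun h => ?_⟩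
  have : (precomp X f).Full := ⟨fun {y y'} => (hf y y').2⟩
  have : (precomp X f).Faithful := ⟨fun {y y'} => (hf y y').1⟩
  have : (precomp X f).EssSurj := ⟨h⟩
  exact {}

/-- If `f` is corepresentably fully surjective (precomposition with `f` is fully faithful),
then for every object `X` the following are equivalent: (a) every 1-cell `A ⟶ X` has a
right Kan extension along `f` with invertible counit; (b) every 1-cell `A ⟶ X` has a left
Kan extension along `f` with invertible unit; (c) the precomposition functor
`(− ∘ f) : (B' ⟶ X) ⥤ (A ⟶ X)` is an equivalence of categories. -/
theorem statement2 {A B' : B} (f : A ⟶ B')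
    (hf : ∀ (Z : B) (y y' : B' ⟶ Z),
      Function.Bijective (fun τ : y ⟶ y' => f ◁ τ))
    (X : B) :
    ((∀ x : A ⟶ X, ∃ (r : B' ⟶ X) (ε' : f ≫ r ⟶ x), IsRanCounit f x r ε' ∧ IsIso ε') ↔
      (Bicategory.precomp X f).IsEquivalence) ∧
    ((∀ x : A ⟶ X, ∃ (l : B' ⟶ X) (η : x ⟶ f ≫ l), IsLanUnit f x l η ∧ IsIso η) ↔
      (Bicategory.precomp X f).IsEquivalence) := by
  rw [precomp_isEquivalence_iff X f (hf X)]
  exact ⟨forall_congr' fun _ => exists_isRanCounit_isIso_iff (hf X),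
    forall_congr' fun _ => exists_isLanUnit_isIso_iff (hf X)⟩
end
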